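/- arXiv:1703.10064 — 3 statements merged into one kernel-verified Lean document; each statement's English description precedes it below -/
import Mathlib

section
/- Let n ≥ 2, s > 0, H > 0, a, b > 0. The function K ↦ L(s,H,K) = a·s^{n−1}·((n−1)H²/s² + K²)^{n/2} + b·H^{n−1}·((n−1)s²/H² + 1/K²)^{n/2}·K is strictly convex on (0,∞). -/
/-!
With `p = n/2 ≥ 1`, the first term is `A (c + K²)^p`, a convex increasing function of the
strictly convex `K ↦ c + K²`, hence strictly convex. The second term is `B K φ(1/K)` with
`φ u = (d + u²)^p` convex, and the perspective `K ↦ K φ(1/K)` of a convex function is convex.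
A strictly convex function plus a convex one is strictly convex.
-/

open Set

theorem strictConvexOn_mul_rpow_add_sq {A c p : ℝ} (hA : 0 < A) (hc : 0 ≤ c) (hp : 1 ≤ p) :
    StrictConvexOn ℝ univ fun K : ℝ => A * (c + K ^ 2) ^ p := by
  set f : ℝ → ℝ := fun K => c + K ^ 2
  have hf : StrictConvexOn ℝ univ f := by
    have h := (even_two.strictConvexOn_pow two_ne_zero).add_const c
    rwa [show ((fun K : ℝ => K ^ 2) + fun _ => c) = f from funext fun K => add_comm _ _] at h
  have himage : f '' univ ⊆ Ici 0 := by
    rintro _ ⟨K, -, rfl⟩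
    exact mem_Ici.2 (by positivity)
  have himage_convex : Convex ℝ (f '' univ) :=
    (isPreconnected_univ.image f (by fun_prop)).ordConnected.convex
  have hmono : StrictMonoOn (fun x : ℝ => A * x ^ p) (Ici 0) :=
    (strictMono_mul_left_of_pos hA).comp_strictMonoOn
      (Real.strictMonoOn_rpow_Ici_of_exponent_pos (by linarith))
  exact (((convexOn_rpow hp).smul hA.le).subset himage himage_convex).comp_strictConvexOn hf
    (hmono.mono himage)

theorem ConvexOn.mul_comp_inv {φ : ℝ → ℝ} (hφ : ConvexOn ℝ (Ioi 0) φ) :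
    ConvexOn ℝ (Ioi 0) fun x => x * φ x⁻¹ := by
  refine ⟨convex_Ioi 0, fun x (hx : 0 < x) y (hy : 0 < y) t u ht hu htu => ?_⟩
  set z := t * x + u * y
  have hz : 0 < z := convex_Ioi (0 : ℝ) hx hy ht hu htu
  -- Jensen for `φ` at `x⁻¹, y⁻¹` with the weights `t x / z, u y / z`, whose average is `z⁻¹`
  have hweights : t * x / z + u * y / z = 1 := by rw [← add_div, div_self hz.ne']
  have haverage : (t * x / z) • x⁻¹ + (u * y / z) • y⁻¹ = z⁻¹ := by
    simp only [smul_eq_mul]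
    field_simp
    rw [htu]
  have h := hφ.2 (inv_pos.2 hx) (inv_pos.2 hy) (by positivity) (by positivity) hweights
  rw [haverage] at h
  calc z * φ z⁻¹ ≤ z * ((t * x / z) • φ x⁻¹ + (u * y / z) • φ y⁻¹) := by gcongr
    _ = t • (x * φ x⁻¹) + u • (y * φ y⁻¹) := by simp only [smul_eq_mul]; field_simp

/-- The total-energy integrand `K ↦ L(s,H,K)` is strictly convex on `(0,∞)`. -/
theorem strictConvexOn_L (n : ℕ) (hn : 2 ≤ n) (s H a b : ℝ)
    (hs : 0 < s) (hH : 0 < H) (ha : 0 < a) (hb : 0 < b) :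
    StrictConvexOn ℝ (Set.Ioi (0 : ℝ)) (fun K : ℝ =>
      a * s ^ (n - 1) * (((n : ℝ) - 1) * H ^ 2 / s ^ 2 + K ^ 2) ^ ((n : ℝ) / 2)
        + b * H ^ (n - 1) * (((n : ℝ) - 1) * s ^ 2 / H ^ 2 + (K ^ 2)⁻¹) ^ ((n : ℝ) / 2) * K) := by
  have hn' : (2 : ℝ) ≤ n := by exact_mod_cast hn
  have hp : 1 ≤ (n : ℝ) / 2 := by linarith
  have hn1 : (0 : ℝ) ≤ n - 1 := by linarith
  set p := (n : ℝ) / 2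
  set c := ((n : ℝ) - 1) * H ^ 2 / s ^ 2
  set d := ((n : ℝ) - 1) * s ^ 2 / H ^ 2
  have hfirst := (strictConvexOn_mul_rpow_add_sq (A := a * s ^ (n - 1)) (by positivity)
    (by positivity : 0 ≤ c) hp).subset (subset_univ _) (convex_Ioi 0)
  have hφ := (strictConvexOn_mul_rpow_add_sq one_pos (by positivity : 0 ≤ d) hp).convexOn.subset
    (subset_univ _) (convex_Ioi 0)
  have hsecond := hφ.mul_comp_inv.smul (by positivity : 0 ≤ b * H ^ (n - 1))
  refine (hfirst.add_convexOn hsecond).congr fun K _ => ?_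
  simp only [Pi.add_apply, smul_eq_mul, inv_pow]
  ring
end

section
/- Let n ≥ 2, a, b > 0 and fix 0 < r ≤ s ≤ R and r_* ≤ H ≤ R_* with r_*, R_* > 0. Then there exists a constant C > 0 (depending on n, a, b, r, R, r_*, R_* but not on K) such that for all K > 0: C·(K^n + K^{1−n}) ≤ L(s,H,K), where L(s,H,K) = a s^{n−1}((n−1)H²/s² + K²)^{n/2} + b H^{n−1}((n−1)s²/H² + K^{−2})^{n/2} K. In particular L is coercive in K. -/
/-!
Both summands of `L` dominate a power of `K`: dropping the nonnegative terms `(n-1)H²/s²` and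
`(n-1)s²/H²` leaves `a sⁿ⁻¹ Kⁿ` and `b Hⁿ⁻¹ K⁻ⁿ K`, and `s ≥ r`, `H ≥ r_*` make the coefficients at
least `a rⁿ⁻¹` and `b r_*ⁿ⁻¹`, so `C = min (a rⁿ⁻¹) (b r_*ⁿ⁻¹)` works.
-/

open Real

lemma Real.sq_rpow_half {K : ℝ} (hK : 0 ≤ K) (p : ℝ) : (K ^ 2) ^ (p / 2) = K ^ p := by
  rw [← rpow_natCast, ← rpow_mul hK, Nat.cast_ofNat, mul_div_cancel₀ p two_ne_zero]

lemma Real.rpow_le_add_sq_rpow_half {x K p : ℝ} (hx : 0 ≤ x) (hK : 0 ≤ K) (hp : 0 ≤ p) :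
    K ^ p ≤ (x + K ^ 2) ^ (p / 2) := by
  rw [← sq_rpow_half hK p]
  gcongr
  linarith

lemma Real.rpow_one_sub_le_add_inv_sq_rpow_half {x K p : ℝ} (hx : 0 ≤ x) (hK : 0 < K)
    (hp : 0 ≤ p) : K ^ (1 - p) ≤ (x + (K ^ 2)⁻¹) ^ (p / 2) * K := by
  calc K ^ (1 - p) = K⁻¹ ^ p * K := by
        rw [rpow_sub hK, rpow_one, inv_rpow hK.le]; ring
    _ ≤ (x + (K ^ 2)⁻¹) ^ (p / 2) * K := by
        rw [← inv_pow]
        gcongr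
        exact rpow_le_add_sq_rpow_half hx (by positivity) hp

lemma min_mul_add_le {c d u v A B : ℝ} (hu : 0 ≤ u) (hv : 0 ≤ v) (hA : c * u ≤ A)
    (hB : d * v ≤ B) : min c d * (u + v) ≤ A + B := by
  have := mul_le_mul_of_nonneg_right (min_le_left c d) hu
  have := mul_le_mul_of_nonneg_right (min_le_right c d) hv
  linarith

theorem coercivity_L_general (n : ℕ) (hn : 2 ≤ n) (a b r R rs Rs : ℝ)
    (ha : 0 < a) (hb : 0 < b) (hr : 0 < r) (hrs : 0 < rs) :
    ∃ C > (0 : ℝ), ∀ s ∈ Set.Icc r R, ∀ H ∈ Set.Icc rs Rs, ∀ K > (0 : ℝ),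
      C * (K ^ (n : ℝ) + K ^ ((1 : ℝ) - n))
        ≤ a * s ^ (n - 1) * (((n : ℝ) - 1) * H ^ 2 / s ^ 2 + K ^ 2) ^ ((n : ℝ) / 2)
            + b * H ^ (n - 1) * (((n : ℝ) - 1) * s ^ 2 / H ^ 2 + (K ^ 2)⁻¹) ^ ((n : ℝ) / 2) * K := by
  refine ⟨min (a * r ^ (n - 1)) (b * rs ^ (n - 1)), by positivity, ?_⟩
  rintro s ⟨hrs_le, -⟩ H ⟨hrsH, -⟩ K hK
  have hn1 : (0 : ℝ) ≤ n - 1 := by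
    rw [sub_nonneg]
    exact_mod_cast one_le_two.trans hn
  have hs : 0 < s := hr.trans_le hrs_le
  have hH : 0 < H := hrs.trans_le hrsH
  apply min_mul_add_le (by positivity) (by positivity)
  · gcongr
    exact rpow_le_add_sq_rpow_half (by positivity) hK.le (by positivity)
  · rw [mul_assoc _ (_ ^ _) K]
    gcongr
    exact rpow_one_sub_le_add_inv_sq_rpow_half (by positivity) hK (by positivity)

/-- Coercivity bound: `C (Kⁿ + K^(1-n)) ≤ L(s,H,K)` uniformly on
`[r,R] × [r_*,R_*]` for some constant `C > 0`. -/
theorem coercivity_L (n : ℕ) (hn : 2 ≤ n) (a b r R rs Rs : ℝ)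
    (ha : 0 < a) (hb : 0 < b) (hr : 0 < r) (hrR : r ≤ R) (hrs : 0 < rs) (hRs : rs ≤ Rs) :
    ∃ C > (0 : ℝ), ∀ s ∈ Set.Icc r R, ∀ H ∈ Set.Icc rs Rs, ∀ K > (0 : ℝ),
      C * (K ^ (n : ℝ) + K ^ ((1 : ℝ) - n))
        ≤ a * s ^ (n - 1) * (((n : ℝ) - 1) * H ^ 2 / s ^ 2 + K ^ 2) ^ ((n : ℝ) / 2)
            + b * H ^ (n - 1) * (((n : ℝ) - 1) * s ^ 2 / H ^ 2 + (K ^ 2)⁻¹) ^ ((n : ℝ) / 2) * K :=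
  coercivity_L_general n hn a b r R rs Rs ha hb hr hrs
end

section
/- Let n ≥ 2, a, b > 0 and fix B > 0. With G as above, lim_{t→∞} t·G(t,B) = −(a/b)(n−1)^{n/2−1} B^{n+1}. -/
/-- `U(t,y) = a ((n-1)t² + y²)^((n-4)/2) ((n-1)t² + (n-2)ty + y²)`. -/
noncomputable def U (n : ℕ) (a : ℝ) (t y : ℝ) : ℝ :=
  a * (((n : ℝ) - 1) * t ^ 2 + y ^ 2) ^ (((n : ℝ) - 4) / 2)
    * (((n : ℝ) - 1) * t ^ 2 + ((n : ℝ) - 2) * t * y + y ^ 2)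

/-- `V(t,y) = b ((n-1)y² + t²)^((n-4)/2) (t² + (n-2)ty + (n-1)y²) / (t y^(n-1))`. -/
noncomputable def V (n : ℕ) (b : ℝ) (t y : ℝ) : ℝ :=
  b * (((n : ℝ) - 1) * y ^ 2 + t ^ 2) ^ (((n : ℝ) - 4) / 2)
    * (t ^ 2 + ((n : ℝ) - 2) * t * y + ((n : ℝ) - 1) * y ^ 2) / (t * y ^ (n - 1))

/-- `W(t,y) = (t² + y²)(a((n-1)t² + y²)^((n-4)/2) + b t ((n-1)y² + t²)^((n-4)/2)/y^(n+1))`. -/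
noncomputable def W (n : ℕ) (a b : ℝ) (t y : ℝ) : ℝ :=
  (t ^ 2 + y ^ 2) * (a * (((n : ℝ) - 1) * t ^ 2 + y ^ 2) ^ (((n : ℝ) - 4) / 2)
    + b * t * (((n : ℝ) - 1) * y ^ 2 + t ^ 2) ^ (((n : ℝ) - 4) / 2) / y ^ (n + 1))

/-- `G = -(U + V)/W`, the right-hand side of the ODE `F' = G(t, F)`. -/
noncomputable def G (n : ℕ) (a b : ℝ) (t y : ℝ) : ℝ :=
  -(U n a t y + V n b t y) / W n a b t y

/-! With `s = 1 / t`, both `t (U + V)(t, B)` and `W(t, B)` are `t ^ (n - 1)` times functions of `s`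
that are continuous at `s = 0`: the `rpow` factors are homogeneous of degree `n - 4` in `(t, y)`.
Hence `t G(t, B)` tends to minus the ratio of their values at `0`, namely
`a (n - 1) ^ (n / 2 - 1)` over `b / B ^ (n + 1)`. -/

lemma mul_sq_add_sq_rpow_half {c t : ℝ} (hc : 0 ≤ c) (ht : 0 < t) (y p : ℝ) :
    (c * t ^ 2 + y ^ 2) ^ (p / 2) = t ^ p * (c + (t⁻¹ * y) ^ 2) ^ (p / 2) := by
  have hsplit : c * t ^ 2 + y ^ 2 = t ^ 2 * (c + (t⁻¹ * y) ^ 2) := by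
    field_simp
  rw [hsplit, Real.mul_rpow (by positivity) (by positivity), ← Real.rpow_natCast_mul ht.le,
    Nat.cast_ofNat, mul_div_cancel₀ p two_ne_zero]

lemma mul_sq_add_sq_rpow_half' {c t : ℝ} (hc : 0 ≤ c) (ht : 0 < t) (y p : ℝ) :
    (c * y ^ 2 + t ^ 2) ^ (p / 2) = t ^ p * (c * (t⁻¹ * y) ^ 2 + 1) ^ (p / 2) := by
  have hsplit : c * y ^ 2 + t ^ 2 = t ^ 2 * (c * (t⁻¹ * y) ^ 2 + 1) := by
    field_simp
  rw [hsplit, Real.mul_rpow (by positivity) (by positivity), ← Real.rpow_natCast_mul ht.le,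
    Nat.cast_ofNat, mul_div_cancel₀ p two_ne_zero]

lemma rpow_natCast_sub_one_eq {t : ℝ} (ht : 0 < t) (n : ℕ) :
    t ^ ((n : ℝ) - 1) = t ^ ((n : ℝ) - 4) * t ^ 3 := by
  rw [← Real.rpow_add_natCast ht.ne']
  norm_num [sub_add]

section Scaling

variable (n : ℕ) (a b B : ℝ)

noncomputable def scaledNumer (s : ℝ) : ℝ :=
  a * (((n : ℝ) - 1) + (s * B) ^ 2) ^ (((n : ℝ) - 4) / 2)
      * (((n : ℝ) - 1) + ((n : ℝ) - 2) * (s * B) + (s * B) ^ 2)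
    + b * s * (((n : ℝ) - 1) * (s * B) ^ 2 + 1) ^ (((n : ℝ) - 4) / 2)
      * (1 + ((n : ℝ) - 2) * (s * B) + ((n : ℝ) - 1) * (s * B) ^ 2) / B ^ (n - 1)

noncomputable def scaledDenom (s : ℝ) : ℝ :=
  (1 + (s * B) ^ 2) * (a * s * (((n : ℝ) - 1) + (s * B) ^ 2) ^ (((n : ℝ) - 4) / 2)
    + b * (((n : ℝ) - 1) * (s * B) ^ 2 + 1) ^ (((n : ℝ) - 4) / 2) / B ^ (n + 1))

variable {n} {t : ℝ}

lemma mul_U_add_V_eq (hn : 1 ≤ n) (ht : 0 < t) :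
    t * (U n a t B + V n b t B) = t ^ ((n : ℝ) - 1) * scaledNumer n a b B t⁻¹ := by
  have hn1 : (0 : ℝ) ≤ (n : ℝ) - 1 := sub_nonneg.2 (by exact_mod_cast hn)
  have hT : 0 < t ^ ((n : ℝ) - 4) := Real.rpow_pos_of_pos ht _
  simp only [U, V, scaledNumer, mul_sq_add_sq_rpow_half hn1 ht, mul_sq_add_sq_rpow_half' hn1 ht,
    rpow_natCast_sub_one_eq ht]
  field_simp

lemma W_eq (hn : 1 ≤ n) (ht : 0 < t) :
    W n a b t B = t ^ ((n : ℝ) - 1) * scaledDenom n a b B t⁻¹ := by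
  have hn1 : (0 : ℝ) ≤ (n : ℝ) - 1 := sub_nonneg.2 (by exact_mod_cast hn)
  have hT : 0 < t ^ ((n : ℝ) - 4) := Real.rpow_pos_of_pos ht _
  simp only [W, scaledDenom, mul_sq_add_sq_rpow_half hn1 ht, mul_sq_add_sq_rpow_half' hn1 ht,
    rpow_natCast_sub_one_eq ht]
  field_simp

lemma mul_G_eq (hn : 1 ≤ n) (ht : 0 < t) :
    t * G n a b t B = -scaledNumer n a b B t⁻¹ / scaledDenom n a b B t⁻¹ := by
  rw [G, mul_div_assoc', mul_neg, mul_U_add_V_eq a b B hn ht, W_eq a b B hn ht, ← mul_neg,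
    mul_div_mul_left _ _ (Real.rpow_pos_of_pos ht _).ne']

lemma continuous_scaledNumer (hn : 1 < n) : Continuous (scaledNumer n a b B) := by
  have hn1 : (0 : ℝ) < (n : ℝ) - 1 := sub_pos.2 (by exact_mod_cast hn)
  unfold scaledNumer
  refine .add (.mul (.mul continuous_const (.rpow_const (by fun_prop) fun s => ?_)) (by fun_prop))
    (.div_const (.mul (.mul (by fun_prop) (.rpow_const (by fun_prop) fun s => ?_)) (by fun_prop)) _)
  all_goals exact .inl (by positivity)

lemma continuous_scaledDenom (hn : 1 < n) : Continuous (scaledDenom n a b B) := by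
  have hn1 : (0 : ℝ) < (n : ℝ) - 1 := sub_pos.2 (by exact_mod_cast hn)
  unfold scaledDenom
  refine .mul (by fun_prop) (.add (.mul (by fun_prop) (.rpow_const (by fun_prop) fun s => ?_))
    (.div_const (.mul continuous_const (.rpow_const (by fun_prop) fun s => ?_)) _))
  all_goals exact .inl (by positivity)

lemma scaledNumer_zero (hn : 1 < n) :
    scaledNumer n a b B 0 = a * ((n : ℝ) - 1) ^ ((n : ℝ) / 2 - 1) := by
  have hn1 : (n : ℝ) - 1 ≠ 0 := sub_ne_zero.2 (by exact_mod_cast hn.ne')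
  rw [scaledNumer, show (n : ℝ) / 2 - 1 = ((n : ℝ) - 4) / 2 + 1 by ring, Real.rpow_add_one hn1]
  ring_nf

lemma scaledDenom_zero : scaledDenom n a b B 0 = b / B ^ (n + 1) := by
  simp [scaledDenom]

end Scaling

theorem tG_limit_infty_general (n : ℕ) (hn : 2 ≤ n) (a b : ℝ) (hb : 0 < b)
    (B : ℝ) (hB : 0 < B) :
    Filter.Tendsto (fun t : ℝ => t * G n a b t B) Filter.atTop
      (nhds (-(a / b) * ((n : ℝ) - 1) ^ ((n : ℝ) / 2 - 1) * B ^ (n + 1))) := by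
  have hden : scaledDenom n a b B 0 ≠ 0 := by
    rw [scaledDenom_zero]
    positivity
  have hcont : ContinuousAt (fun s => -scaledNumer n a b B s / scaledDenom n a b B s) 0 :=
    (continuous_scaledNumer a b B hn).neg.continuousAt.div
      (continuous_scaledDenom a b B hn).continuousAt hden
  have hlim := hcont.tendsto.comp tendsto_inv_atTop_zero
  rw [Function.comp_def, scaledNumer_zero a b B hn, scaledDenom_zero] at hlim
  refine (hlim.congr' ?_).trans_eq ?_
  · filter_upwards [Filter.eventually_gt_atTop 0] with t ht
    exact (mul_G_eq a b B (by omega) ht).symm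
  · field_simp

/-- `lim_{t→∞} t G(t,B) = -(a/b)(n-1)^(n/2-1) B^(n+1)`. -/
theorem tG_limit_infty (n : ℕ) (hn : 2 ≤ n) (a b : ℝ) (ha : 0 < a) (hb : 0 < b)
    (B : ℝ) (hB : 0 < B) :
    Filter.Tendsto (fun t : ℝ => t * G n a b t B) Filter.atTop
      (nhds (-(a / b) * ((n : ℝ) - 1) ^ ((n : ℝ) / 2 - 1) * B ^ (n + 1))) :=
  tG_limit_infty_general n hn a b hb B hB
end
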